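/- Non-smooth case: let f be convex and L-Lipschitz, let z* be a dual optimal solution (so x* = −λ⁻¹Aᵀz*), let y* be a sketched dual optimal solution, and set x̃ = −λ⁻¹Aᵀy*. Then for any λ > 0, ‖x̃ − x*‖₂ ≤ (6L/λ)·√(σ₁ Z_f), where σ₁ is the largest singular value of A. -/

import Mathlib

open Matrix Finset Real Set

noncomputable section

namespace Sketch

/-- The ℓ2 norm of a vector in `Fin k → ℝ`. -/
def norm2 {k : ℕ} (x : Fin k → ℝ) : ℝ := Real.sqrt (∑ i, x i ^ 2)

/-- The continuous linear functional `v ↦ ⟨w, v⟩`; used to state that a function has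
gradient `w` at a point. -/
def dotCLM {k : ℕ} (w : Fin k → ℝ) : (Fin k → ℝ) →L[ℝ] ℝ :=
  LinearMap.toContinuousLinearMap
    { toFun := fun v => w ⬝ᵥ v
      map_add' := fun a b => dotProduct_add w a b
      map_smul' := fun c a => by
        simp [dotProduct, Finset.mul_sum, mul_left_comm] }

/-- The domain of the Fenchel conjugate `f*`. -/
def fenchelDom {k : ℕ} (f : (Fin k → ℝ) → ℝ) : Set (Fin k → ℝ) :=
  {z | BddAbove (Set.range fun w => w ⬝ᵥ z - f w)}

/-- The Fenchel conjugate `f*(z) = sup_w (⟨w, z⟩ - f(w))` (as a real-valued supremum,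
meaningful on `fenchelDom f`). -/
def fenchel {k : ℕ} (f : (Fin k → ℝ) → ℝ) (z : Fin k → ℝ) : ℝ :=
  ⨆ w, (w ⬝ᵥ z - f w)

/-- The subdifferential of the Fenchel conjugate `f*` at `z`. -/
def fenchelSubdiff {k : ℕ} (f : (Fin k → ℝ) → ℝ) (z : Fin k → ℝ) : Set (Fin k → ℝ) :=
  {g | ∀ y ∈ fenchelDom f, fenchel f z + g ⬝ᵥ (y - z) ≤ fenchel f y}

/-- `P` is the orthogonal projector onto the range (column space) of `S`. -/
def IsOrthProj {q m : ℕ} (S : Matrix (Fin q) (Fin m) ℝ) (P : Matrix (Fin q) (Fin q) ℝ) : Prop :=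
  Pᵀ = P ∧ P * P = P ∧ P * S = S ∧ ∃ C : Matrix (Fin m) (Fin q) ℝ, P = S * C

/-- The quantity `Z_f`: the supremum of `(Δᵀ B P⊥ Bᵀ Δ)^{1/2} / ‖Δ‖₂` over nonzero
`Δ ∈ dom f* - z*`. -/
def Zf {k q : ℕ} (f : (Fin k → ℝ) → ℝ) (B : Matrix (Fin k) (Fin q) ℝ)
    (Pperp : Matrix (Fin q) (Fin q) ℝ) (zs : Fin k → ℝ) : ℝ :=
  sSup {r | ∃ Δ : Fin k → ℝ, Δ ≠ 0 ∧ zs + Δ ∈ fenchelDom f ∧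
    r = Real.sqrt (Δ ⬝ᵥ (B * Pperp * Bᵀ).mulVec Δ) / norm2 Δ}

/-- The spectral norm (largest singular value) of a matrix. -/
def specNorm {a b : ℕ} (M : Matrix (Fin a) (Fin b) ℝ) : ℝ :=
  sSup {r | ∃ v : Fin b → ℝ, norm2 v = 1 ∧ r = norm2 (M.mulVec v)}

/-- The eigenvalues of `A * Aᵀ` (i.e. the squared singular values of `A`),
sorted in decreasing order. -/
def eigsDesc {n d : ℕ} (A : Matrix (Fin n) (Fin d) ℝ) : Fin n → ℝ := fun i =>
  ((Matrix.isHermitian_mul_conjTranspose_self A).eigenvalues ∘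
    Tuple.sort (Matrix.isHermitian_mul_conjTranspose_self A).eigenvalues) i.rev

/-- The spectral tail `R_k(A) = (σ_k² + (1/k) ∑_{j=k+1}^ρ σ_j²)^{1/2}`. -/
def Rk {n d : ℕ} (A : Matrix (Fin n) (Fin d) ℝ) (k : ℕ) : ℝ :=
  Real.sqrt ((∑ j : Fin n, if (j : ℕ) + 1 = k then eigsDesc A j else 0)
    + (1 / (k : ℝ)) * ∑ j : Fin n, if k ≤ (j : ℕ) then eigsDesc A j else 0)

/-- Product measure on `n × m` matrices with i.i.d. standard Gaussian entries. -/
def gaussMatrix (n m : ℕ) : MeasureTheory.Measure (Fin n → Fin m → ℝ) :=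
  MeasureTheory.Measure.pi fun _ => MeasureTheory.Measure.pi fun _ =>
    ProbabilityTheory.gaussianReal 0 1


/-- The largest eigenvalue (Rayleigh quotient supremum) of a symmetric matrix. -/
def eigMax {q : ℕ} (M : Matrix (Fin q) (Fin q) ℝ) : ℝ :=
  sSup {r | ∃ v : Fin q → ℝ, norm2 v = 1 ∧ r = v ⬝ᵥ M.mulVec v}

/-- The smallest eigenvalue (Rayleigh quotient infimum) of a symmetric matrix. -/
def eigMin {q : ℕ} (M : Matrix (Fin q) (Fin q) ℝ) : ℝ :=
  sInf {r | ∃ v : Fin q → ℝ, norm2 v = 1 ∧ r = v ⬝ᵥ M.mulVec v}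

/-!
Test both dual problems at the midpoint of `z*` and `y*`: it lies in `dom f*`, and convexity
of `f*` cancels the conjugate terms, so the parallelogram law together with Pythagoras for `P`
leaves `‖Aᵀ(y* - z*)‖² ≤ 2 (‖P⊥ Aᵀ y*‖² - ‖P⊥ Aᵀ z*‖²)`. Writing `Δ = y* - z* ∈ dom f* - z*`,
the right side is at most `2 ‖P⊥ Aᵀ Δ‖ (‖P⊥ Aᵀ z*‖ + ‖P⊥ Aᵀ y*‖) ≤ 2 (Z_f ‖Δ‖) (2 σ₁ L)`, and
`‖Δ‖ ≤ 2L` because Lipschitz continuity confines `dom f*` to the ball of radius `L`.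
-/

section Norm2

variable {k : ℕ}

lemma norm2_eq_norm_toLp (x : Fin k → ℝ) : norm2 x = ‖WithLp.toLp 2 x‖ := by
  simp [norm2, EuclideanSpace.norm_eq]

lemma dotProduct_eq_inner_toLp (x y : Fin k → ℝ) :
    x ⬝ᵥ y = inner ℝ (WithLp.toLp 2 x) (WithLp.toLp 2 y) := by
  simp [EuclideanSpace.inner_eq_star_dotProduct, dotProduct_comm]

lemma norm2_nonneg (x : Fin k → ℝ) : 0 ≤ norm2 x := Real.sqrt_nonneg _

lemma norm2_sq (x : Fin k → ℝ) : norm2 x ^ 2 = x ⬝ᵥ x := by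
  rw [norm2_eq_norm_toLp, dotProduct_eq_inner_toLp, real_inner_self_eq_norm_sq]

lemma norm2_smul (c : ℝ) (x : Fin k → ℝ) : norm2 (c • x) = |c| * norm2 x := by
  simp [norm2_eq_norm_toLp, norm_smul]

lemma norm2_pos {x : Fin k → ℝ} (hx : x ≠ 0) : 0 < norm2 x := by
  simpa [norm2_eq_norm_toLp] using hx

lemma dotProduct_le_norm2_mul_norm2 (x y : Fin k → ℝ) : x ⬝ᵥ y ≤ norm2 x * norm2 y := by
  simpa [dotProduct_eq_inner_toLp, norm2_eq_norm_toLp] using real_inner_le_norm _ _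

lemma norm2_sub_le (x y : Fin k → ℝ) : norm2 (x - y) ≤ norm2 x + norm2 y := by
  simpa [norm2_eq_norm_toLp] using norm_sub_le (WithLp.toLp 2 x) (WithLp.toLp 2 y)

lemma sq_norm2_sub_sq_norm2_le (x y : Fin k → ℝ) :
    norm2 y ^ 2 - norm2 x ^ 2 ≤ norm2 (y - x) * (norm2 x + norm2 y) := by
  have h : norm2 y - norm2 x ≤ norm2 (y - x) := by
    simpa [norm2_eq_norm_toLp] using norm_sub_norm_le (WithLp.toLp 2 y) (WithLp.toLp 2 x)
  nlinarith [norm2_nonneg x, norm2_nonneg y]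

end Norm2

section Projector

variable {q : ℕ} {P : Matrix (Fin q) (Fin q) ℝ}

lemma mulVec_dotProduct_mulVec_of_idempotent (hPs : P.IsSymm) (hP : IsIdempotentElem P)
    (v w : Fin q → ℝ) : (P *ᵥ v) ⬝ᵥ (P *ᵥ w) = (P *ᵥ v) ⬝ᵥ w := by
  rw [dotProduct_mulVec, ← mulVec_transpose, hPs.eq, mulVec_mulVec, hP.eq]

lemma sq_norm2_eq_add_of_idempotent (hPs : P.IsSymm) (hP : IsIdempotentElem P)
    (v : Fin q → ℝ) : norm2 v ^ 2 = norm2 (P *ᵥ v) ^ 2 + norm2 ((1 - P) *ᵥ v) ^ 2 := by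
  have hPv := mulVec_dotProduct_mulVec_of_idempotent hPs hP v v
  simp only [norm2_sq, sub_mulVec, one_mulVec, sub_dotProduct, dotProduct_sub,
    dotProduct_comm v (P *ᵥ v)] at hPv ⊢
  linarith

lemma norm2_mulVec_le_of_idempotent (hPs : P.IsSymm) (hP : IsIdempotentElem P)
    (v : Fin q → ℝ) : norm2 (P *ᵥ v) ≤ norm2 v := by
  have h := sq_norm2_eq_add_of_idempotent hPs hP v
  exact (pow_le_pow_iff_left₀ (norm2_nonneg _) (norm2_nonneg _) two_ne_zero).mp
    (by nlinarith [sq_nonneg (norm2 ((1 - P) *ᵥ v))])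

lemma dotProduct_mul_mul_transpose_mulVec {n : ℕ} (A : Matrix (Fin n) (Fin q) ℝ)
    (hPs : P.IsSymm) (hP : IsIdempotentElem P) (Δ : Fin n → ℝ) :
    Δ ⬝ᵥ (A * P * Aᵀ) *ᵥ Δ = norm2 (P *ᵥ Aᵀ *ᵥ Δ) ^ 2 := by
  rw [norm2_sq, mulVec_dotProduct_mulVec_of_idempotent hPs hP, ← mulVec_mulVec,
    ← mulVec_mulVec, dotProduct_mulVec, ← mulVec_transpose, dotProduct_comm]

/-- After expanding with Pythagoras the slack is `‖P (a - b)‖² / 4 ≥ 0`. -/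
lemma sq_norm2_sub_le_of_midpoint (hPs : P.IsSymm) (hP : IsIdempotentElem P)
    (a b : Fin q → ℝ)
    (h : norm2 a ^ 2 + norm2 (P *ᵥ b) ^ 2 ≤
      norm2 ((1 / 2 : ℝ) • (a + b)) ^ 2 + norm2 (P *ᵥ ((1 / 2 : ℝ) • (a + b))) ^ 2) :
    norm2 (b - a) ^ 2 ≤ 2 * (norm2 ((1 - P) *ᵥ b) ^ 2 - norm2 ((1 - P) *ᵥ a) ^ 2) := by
  have ha := sq_norm2_eq_add_of_idempotent hPs hP a
  have hb := sq_norm2_eq_add_of_idempotent hPs hP b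
  have hd := sq_nonneg (norm2 (P *ᵥ a - P *ᵥ b))
  simp only [norm2_sq, mulVec_smul, mulVec_add, smul_dotProduct, dotProduct_smul,
    add_dotProduct, dotProduct_add, sub_dotProduct, dotProduct_sub, smul_eq_mul,
    dotProduct_comm b a, dotProduct_comm (P *ᵥ b) (P *ᵥ a)] at h ha hb hd ⊢
  linarith

end Projector

section SpecNorm

variable {a b : ℕ}

lemma bddAbove_norm2_mulVec_unit (M : Matrix (Fin a) (Fin b) ℝ) :
    BddAbove {r | ∃ v : Fin b → ℝ, norm2 v = 1 ∧ r = norm2 (M *ᵥ v)} := by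
  refine ⟨‖(Matrix.toEuclideanLin M).toContinuousLinearMap‖, ?_⟩
  rintro r ⟨v, hv, rfl⟩
  simpa [← norm2_eq_norm_toLp, hv] using
    (Matrix.toEuclideanLin M).toContinuousLinearMap.le_opNorm (WithLp.toLp 2 v)

lemma specNorm_nonneg (M : Matrix (Fin a) (Fin b) ℝ) : 0 ≤ specNorm M :=
  Real.sSup_nonneg fun _ ⟨_, _, hr⟩ => hr ▸ norm2_nonneg _

lemma norm2_mulVec_le_specNorm (M : Matrix (Fin a) (Fin b) ℝ) (v : Fin b → ℝ) :
    norm2 (M *ᵥ v) ≤ specNorm M * norm2 v := by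
  rcases eq_or_ne v 0 with rfl | hv
  · simp [norm2_eq_norm_toLp]
  have hc := norm2_pos hv
  have hunit : norm2 ((norm2 v)⁻¹ • v) = 1 := by
    rw [norm2_smul, abs_of_pos (inv_pos.mpr hc), inv_mul_cancel₀ hc.ne']
  have hle := le_csSup (bddAbove_norm2_mulVec_unit M) ⟨_, hunit, rfl⟩
  rw [mulVec_smul, norm2_smul, abs_of_pos (inv_pos.mpr hc), inv_mul_le_iff₀ hc] at hle
  rw [specNorm, mul_comm]
  exact hle

lemma norm2_transpose_mulVec_le_specNorm (M : Matrix (Fin a) (Fin b) ℝ) (z : Fin a → ℝ) :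
    norm2 (Mᵀ *ᵥ z) ≤ specNorm M * norm2 z := by
  set w := Mᵀ *ᵥ z
  have hw : norm2 w ^ 2 ≤ specNorm M * norm2 z * norm2 w :=
    calc norm2 w ^ 2 = z ⬝ᵥ M *ᵥ w := by
          rw [norm2_sq, dotProduct_mulVec z M w, ← mulVec_transpose]
      _ ≤ norm2 z * norm2 (M *ᵥ w) := dotProduct_le_norm2_mul_norm2 _ _
      _ ≤ norm2 z * (specNorm M * norm2 w) :=
          mul_le_mul_of_nonneg_left (norm2_mulVec_le_specNorm M w) (norm2_nonneg z)
      _ = specNorm M * norm2 z * norm2 w := by ring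
  nlinarith [norm2_nonneg w, mul_nonneg (specNorm_nonneg M) (norm2_nonneg z)]

end SpecNorm

section Fenchel

variable {k : ℕ} {f : (Fin k → ℝ) → ℝ}

lemma convexOn_fenchel (f : (Fin k → ℝ) → ℝ) : ConvexOn ℝ (fenchelDom f) (fenchel f) := by
  have key : ∀ ⦃z⦄, z ∈ fenchelDom f → ∀ ⦃y⦄, y ∈ fenchelDom f → ∀ ⦃a b : ℝ⦄, 0 ≤ a → 0 ≤ b →
      a + b = 1 → ∀ w, w ⬝ᵥ (a • z + b • y) - f w ≤ a * fenchel f z + b * fenchel f y := by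
    intro z hz y hy a b ha hb hab w
    have hfz : w ⬝ᵥ z - f w ≤ fenchel f z := le_ciSup hz w
    have hfy : w ⬝ᵥ y - f w ≤ fenchel f y := le_ciSup hy w
    have hfw : f w = a * f w + b * f w := by rw [← add_mul, hab, one_mul]
    rw [dotProduct_add, dotProduct_smul, dotProduct_smul, smul_eq_mul, smul_eq_mul]
    nlinarith [mul_le_mul_of_nonneg_left hfz ha, mul_le_mul_of_nonneg_left hfy hb]
  exact ⟨fun z hz y hy a b ha hb hab => ⟨_, Set.forall_mem_range.2 (key hz hy ha hb hab)⟩,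
    fun z hz y hy a b ha hb hab => ciSup_le (key hz hy ha hb hab)⟩

/-- Along the ray `t ↦ t • z`, `⟨t z, z⟩ - f (t z) ≥ t (‖z‖² - L ‖z‖) - f 0`, which is unbounded
unless `‖z‖ ≤ L`. -/
lemma norm2_le_of_mem_fenchelDom {L : ℝ} (hL : 0 ≤ L)
    (hlip : ∀ w v, |f w - f v| ≤ L * norm2 (w - v)) {z : Fin k → ℝ} (hz : z ∈ fenchelDom f) :
    norm2 z ≤ L := by
  obtain ⟨C, hC⟩ := hz
  have hray : ∀ t, 0 ≤ t → t * (norm2 z ^ 2 - L * norm2 z) ≤ C + f 0 := by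
    intro t ht
    have hval : (t • z) ⬝ᵥ z - f (t • z) ≤ C := hC ⟨_, rfl⟩
    have hgrowth := (le_abs_self _).trans (hlip (t • z) 0)
    rw [sub_zero, norm2_smul, abs_of_nonneg ht] at hgrowth
    rw [smul_dotProduct, smul_eq_mul, ← norm2_sq] at hval
    nlinarith
  by_contra hcon
  have hδ : 0 < norm2 z ^ 2 - L * norm2 z := by nlinarith [not_le.mp hcon]
  have hbig := hray ((|C + f 0| + 1) / (norm2 z ^ 2 - L * norm2 z)) (by positivity)
  rw [div_mul_cancel₀ _ hδ.ne'] at hbig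
  linarith [le_abs_self (C + f 0)]

end Fenchel

section Zf

variable {n q : ℕ} {f : (Fin n → ℝ) → ℝ}

lemma Zf_nonneg (f : (Fin n → ℝ) → ℝ) (B : Matrix (Fin n) (Fin q) ℝ)
    (Pperp : Matrix (Fin q) (Fin q) ℝ) (zs : Fin n → ℝ) : 0 ≤ Zf f B Pperp zs :=
  Real.sSup_nonneg fun _ ⟨_, _, _, hr⟩ => hr ▸ div_nonneg (Real.sqrt_nonneg _) (norm2_nonneg _)

lemma norm2_mulVec_transpose_le_Zf_mul {A : Matrix (Fin n) (Fin q) ℝ}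
    {Q : Matrix (Fin q) (Fin q) ℝ} (hQs : Q.IsSymm) (hQ : IsIdempotentElem Q)
    {zs Δ : Fin n → ℝ} (hΔ : zs + Δ ∈ fenchelDom f) :
    norm2 (Q *ᵥ Aᵀ *ᵥ Δ) ≤ Zf f A Q zs * norm2 Δ := by
  rcases eq_or_ne Δ 0 with rfl | hΔ0
  · simp [norm2_eq_norm_toLp]
  have hratio : ∀ Δ : Fin n → ℝ,
      Real.sqrt (Δ ⬝ᵥ (A * Q * Aᵀ) *ᵥ Δ) / norm2 Δ = norm2 (Q *ᵥ Aᵀ *ᵥ Δ) / norm2 Δ := by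
    intro Δ
    rw [dotProduct_mul_mul_transpose_mulVec A hQs hQ, Real.sqrt_sq (norm2_nonneg _)]
  have hbdd : BddAbove {r | ∃ Δ : Fin n → ℝ, Δ ≠ 0 ∧ zs + Δ ∈ fenchelDom f ∧
      r = Real.sqrt (Δ ⬝ᵥ (A * Q * Aᵀ) *ᵥ Δ) / norm2 Δ} := by
    refine ⟨specNorm A, ?_⟩
    rintro r ⟨Δ, hΔ0, -, rfl⟩
    rw [hratio, div_le_iff₀ (norm2_pos hΔ0)]
    exact (norm2_mulVec_le_of_idempotent hQs hQ _).trans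
      (norm2_transpose_mulVec_le_specNorm A Δ)
  have hle := le_csSup hbdd ⟨Δ, hΔ0, hΔ, rfl⟩
  rwa [hratio, div_le_iff₀ (norm2_pos hΔ0)] at hle

end Zf

section SketchedDual

variable {n d : ℕ} {f : (Fin n → ℝ) → ℝ} {lam : ℝ} {A : Matrix (Fin n) (Fin d) ℝ}
  {P : Matrix (Fin d) (Fin d) ℝ} {zs ys : Fin n → ℝ}

lemma sq_norm2_transpose_mulVec_sub_le (hlam : 0 < lam) (hPs : P.IsSymm)
    (hP : IsIdempotentElem P) (hzsdom : zs ∈ fenchelDom f)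
    (hzs : ∀ z ∈ fenchelDom f,
      fenchel f zs + 1 / (2 * lam) * norm2 (Aᵀ.mulVec zs) ^ 2
        ≤ fenchel f z + 1 / (2 * lam) * norm2 (Aᵀ.mulVec z) ^ 2)
    (hysdom : ys ∈ fenchelDom f)
    (hys : ∀ y ∈ fenchelDom f,
      fenchel f ys + 1 / (2 * lam) * norm2 ((P * Aᵀ).mulVec ys) ^ 2
        ≤ fenchel f y + 1 / (2 * lam) * norm2 ((P * Aᵀ).mulVec y) ^ 2) :
    norm2 (Aᵀ *ᵥ (ys - zs)) ^ 2 ≤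
      2 * (norm2 ((1 - P) *ᵥ Aᵀ *ᵥ ys) ^ 2 - norm2 ((1 - P) *ᵥ Aᵀ *ᵥ zs) ^ 2) := by
  set m : Fin n → ℝ := (1 / 2 : ℝ) • (zs + ys)
  have hmid : (1 / 2 : ℝ) • zs + (1 / 2 : ℝ) • ys = m := (smul_add _ _ _).symm
  have hhalf : (1 / 2 : ℝ) + 1 / 2 = 1 := add_halves 1
  have hmdom : m ∈ fenchelDom f :=
    hmid ▸ (convexOn_fenchel f).1 hzsdom hysdom (by norm_num) (by norm_num) hhalf
  have hmval : fenchel f m ≤ 1 / 2 * fenchel f zs + 1 / 2 * fenchel f ys :=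
    hmid ▸ (convexOn_fenchel f).2 hzsdom hysdom (by norm_num) (by norm_num) hhalf
  have hzm := hzs m hmdom
  have hym := hys m hmdom
  have hAm : Aᵀ *ᵥ m = (1 / 2 : ℝ) • (Aᵀ *ᵥ zs + Aᵀ *ᵥ ys) := by
    rw [mulVec_smul, mulVec_add]
  rw [← mulVec_mulVec, ← mulVec_mulVec, hAm] at hym
  rw [hAm] at hzm
  rw [mulVec_sub]
  apply sq_norm2_sub_le_of_midpoint hPs hP
  have hc : 0 < 1 / (2 * lam) := by positivity
  refine le_of_mul_le_mul_left ?_ hc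
  rw [mul_add, mul_add]
  linarith

lemma norm2_transpose_mulVec_sub_le {L : ℝ} (hPs : P.IsSymm) (hP : IsIdempotentElem P)
    (hL : 0 ≤ L) (hlam : 0 < lam)
    (hlip : ∀ w v, |f w - f v| ≤ L * norm2 (w - v)) (hzsdom : zs ∈ fenchelDom f)
    (hzs : ∀ z ∈ fenchelDom f,
      fenchel f zs + 1 / (2 * lam) * norm2 (Aᵀ.mulVec zs) ^ 2
        ≤ fenchel f z + 1 / (2 * lam) * norm2 (Aᵀ.mulVec z) ^ 2)
    (hysdom : ys ∈ fenchelDom f)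
    (hys : ∀ y ∈ fenchelDom f,
      fenchel f ys + 1 / (2 * lam) * norm2 ((P * Aᵀ).mulVec ys) ^ 2
        ≤ fenchel f y + 1 / (2 * lam) * norm2 ((P * Aᵀ).mulVec y) ^ 2) :
    norm2 (Aᵀ *ᵥ (ys - zs)) ≤ 6 * L * Real.sqrt (specNorm A * Zf f A (1 - P) zs) := by
  have hQs : (1 - P).IsSymm := isSymm_one.sub hPs
  have hQ : IsIdempotentElem (1 - P) := IsIdempotentElem.one_sub hP
  set σ := specNorm A
  set Z := Zf f A (1 - P) zs
  have hσ := specNorm_nonneg A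
  have hZ : 0 ≤ Z := Zf_nonneg f A (1 - P) zs
  have hz := norm2_le_of_mem_fenchelDom hL hlip hzsdom
  have hy := norm2_le_of_mem_fenchelDom hL hlip hysdom
  have hΔ : norm2 (ys - zs) ≤ 2 * L := (norm2_sub_le _ _).trans (by linarith)
  have hQΔ : norm2 ((1 - P) *ᵥ Aᵀ *ᵥ (ys - zs)) ≤ Z * (2 * L) :=
    (norm2_mulVec_transpose_le_Zf_mul hQs hQ (by rwa [add_sub_cancel])).trans
      (mul_le_mul_of_nonneg_left hΔ hZ)
  have hQA : ∀ x : Fin n → ℝ, norm2 x ≤ L → norm2 ((1 - P) *ᵥ Aᵀ *ᵥ x) ≤ σ * L :=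
    fun x hx => (norm2_mulVec_le_of_idempotent hQs hQ _).trans
      ((norm2_transpose_mulVec_le_specNorm A x).trans (mul_le_mul_of_nonneg_left hx hσ))
  have hsq : norm2 (Aᵀ *ᵥ (ys - zs)) ^ 2 ≤ (6 * L * Real.sqrt (σ * Z)) ^ 2 :=
    calc norm2 (Aᵀ *ᵥ (ys - zs)) ^ 2
        ≤ 2 * (norm2 ((1 - P) *ᵥ Aᵀ *ᵥ ys) ^ 2 - norm2 ((1 - P) *ᵥ Aᵀ *ᵥ zs) ^ 2) :=
          sq_norm2_transpose_mulVec_sub_le hlam hPs hP hzsdom hzs hysdom hys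
      _ ≤ 2 * (norm2 ((1 - P) *ᵥ Aᵀ *ᵥ (ys - zs)) *
            (norm2 ((1 - P) *ᵥ Aᵀ *ᵥ zs) + norm2 ((1 - P) *ᵥ Aᵀ *ᵥ ys))) := by
          rw [mulVec_sub, mulVec_sub]
          gcongr
          exact sq_norm2_sub_sq_norm2_le _ _
      _ ≤ 2 * (Z * (2 * L) * (σ * L + σ * L)) := by
          gcongr
          exacts [add_nonneg (norm2_nonneg _) (norm2_nonneg _), hQA zs hz, hQA ys hy]
      _ ≤ 36 * L ^ 2 * (σ * Z) := by nlinarith [mul_nonneg (sq_nonneg L) (mul_nonneg hσ hZ)]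
      _ = (6 * L * Real.sqrt (σ * Z)) ^ 2 := by
          rw [mul_pow, mul_pow, Real.sq_sqrt (mul_nonneg hσ hZ)]
          ring
  exact (pow_le_pow_iff_left₀ (norm2_nonneg _) (by positivity) two_ne_zero).mp hsq

end SketchedDual

theorem statement_12_general {n d m : ℕ} (f : (Fin n → ℝ) → ℝ) (L lam : ℝ)
    (A : Matrix (Fin n) (Fin d) ℝ)
    (S : Matrix (Fin d) (Fin m) ℝ) (P : Matrix (Fin d) (Fin d) ℝ)
    (hP : IsOrthProj S P)
    (hL : 0 ≤ L) (hlam : 0 < lam)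
    (hlip : ∀ w v, |f w - f v| ≤ L * norm2 (w - v))
    (zs : Fin n → ℝ) (hzsdom : zs ∈ fenchelDom f)
    (hzs : ∀ z ∈ fenchelDom f,
      fenchel f zs + 1 / (2 * lam) * norm2 (Aᵀ.mulVec zs) ^ 2
        ≤ fenchel f z + 1 / (2 * lam) * norm2 (Aᵀ.mulVec z) ^ 2)
    (ys : Fin n → ℝ) (hysdom : ys ∈ fenchelDom f)
    (hys : ∀ y ∈ fenchelDom f,
      fenchel f ys + 1 / (2 * lam) * norm2 ((P * Aᵀ).mulVec ys) ^ 2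
        ≤ fenchel f y + 1 / (2 * lam) * norm2 ((P * Aᵀ).mulVec y) ^ 2) :
    norm2 (-(lam⁻¹ • Aᵀ.mulVec ys) - -(lam⁻¹ • Aᵀ.mulVec zs))
      ≤ 6 * L / lam * Real.sqrt (specNorm A * Zf f A (1 - P) zs) := by
  have hx : -(lam⁻¹ • Aᵀ *ᵥ ys) - -(lam⁻¹ • Aᵀ *ᵥ zs) = (-lam⁻¹) • Aᵀ *ᵥ (ys - zs) := by
    rw [mulVec_sub, smul_sub, neg_smul, neg_smul]
  obtain ⟨hPs, hPP, -, -⟩ := hP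
  rw [hx, norm2_smul, abs_neg, abs_of_pos (inv_pos.mpr hlam)]
  calc lam⁻¹ * norm2 (Aᵀ *ᵥ (ys - zs))
      ≤ lam⁻¹ * (6 * L * Real.sqrt (specNorm A * Zf f A (1 - P) zs)) :=
        mul_le_mul_of_nonneg_left
          (norm2_transpose_mulVec_sub_le hPs hPP hL hlam hlip hzsdom hzs hysdom hys)
          (inv_nonneg.mpr hlam.le)
    _ = 6 * L / lam * Real.sqrt (specNorm A * Zf f A (1 - P) zs) := by ring

/-- non-smooth case: for `f` convex and `L`-Lipschitz, with `zs` a dual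
optimal solution (so `x* = -λ⁻¹ Aᵀ zs`), `ys` a sketched dual optimal solution, and
`x̃ = -λ⁻¹ Aᵀ ys`, one has `‖x̃ - x*‖₂ ≤ (6L/λ) √(σ₁ Z_f)`. -/
theorem statement_12 {n d m : ℕ} (f : (Fin n → ℝ) → ℝ) (L lam : ℝ)
    (A : Matrix (Fin n) (Fin d) ℝ)
    (S : Matrix (Fin d) (Fin m) ℝ) (P : Matrix (Fin d) (Fin d) ℝ)
    (hP : IsOrthProj S P)
    (hL : 0 ≤ L) (hlam : 0 < lam)
    (hconv : ConvexOn ℝ Set.univ f)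
    (hlip : ∀ w v, |f w - f v| ≤ L * norm2 (w - v))
    (zs : Fin n → ℝ) (hzsdom : zs ∈ fenchelDom f)
    (hzs : ∀ z ∈ fenchelDom f,
      fenchel f zs + 1 / (2 * lam) * norm2 (Aᵀ.mulVec zs) ^ 2
        ≤ fenchel f z + 1 / (2 * lam) * norm2 (Aᵀ.mulVec z) ^ 2)
    (ys : Fin n → ℝ) (hysdom : ys ∈ fenchelDom f)
    (hys : ∀ y ∈ fenchelDom f,
      fenchel f ys + 1 / (2 * lam) * norm2 ((P * Aᵀ).mulVec ys) ^ 2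
        ≤ fenchel f y + 1 / (2 * lam) * norm2 ((P * Aᵀ).mulVec y) ^ 2) :
    norm2 (-(lam⁻¹ • Aᵀ.mulVec ys) - -(lam⁻¹ • Aᵀ.mulVec zs))
      ≤ 6 * L / lam * Real.sqrt (specNorm A * Zf f A (1 - P) zs) :=
  statement_12_general f L lam A S P hP hL hlam hlip zs hzsdom hzs ys hysdom hys

end Sketch
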